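/- Let m be a positive integer, let R be a finite nonempty subset of ℝ^m, let A be a finite nonempty subset of ℝ^m, and let x, y ∈ ℝ^m. Then (−IGD(A ∪ {y}, R)) − (−IGD(A, R)) ≥ (−IGD(A ∪ {x} ∪ {y}, R)) − (−IGD(A ∪ {x}, R)); equivalently, the IGD improvement obtained by adding y to A is at least the IGD improvement obtained by adding y to A ∪ {x}. (The explicitly proven single-element base step in the proof of Theorem 1.) -/
import Mathlib


/-- The Euclidean distance on `ℝ^m`. -/
noncomputable def euclDist {m : ℕ} (s r : Fin m → ℝ) : ℝ :=
  Real.sqrt (∑ i, (s i - r i) ^ 2)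

/-- The IGD indicator of a nonempty finite solution set `S` with respect to a
reference set `R`. -/
noncomputable def IGD {m : ℕ} (S : Finset (Fin m → ℝ)) (hS : S.Nonempty)
    (R : Finset (Fin m → ℝ)) : ℝ :=
  (1 / (R.card : ℝ)) * ∑ r ∈ R, S.inf' hS (fun s => euclDist s r)

lemma key_min (a b c : ℝ) (h : b ≤ a) : b - (c ⊓ b) ≤ a - (c ⊓ a) := by
  rcases le_total c b with h1 | h1 <;> rcases le_total c a with h2 | h2 <;>
    simp [min_eq_left, min_eq_right, h1, h2] <;> linarith

/-- The single-element base step in the proof of Theorem 1: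
`(−IGD(A ∪ {y},R)) − (−IGD(A,R)) ≥ (−IGD(A ∪ {x} ∪ {y},R)) − (−IGD(A ∪ {x},R))`,
i.e. the IGD improvement obtained by adding `y` to `A` is at least the IGD
improvement obtained by adding `y` to `A ∪ {x}`. -/
theorem igd_submodular_base (m : ℕ) (hm : 0 < m)
    (R : Finset (Fin m → ℝ)) (hR : R.Nonempty)
    (A : Finset (Fin m → ℝ)) (hA : A.Nonempty) (x y : Fin m → ℝ) :
    (-(IGD (insert y A) (Finset.insert_nonempty y A) R)) - (-(IGD A hA R)) ≥
      (-(IGD (insert y (insert x A))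
          (Finset.insert_nonempty y (insert x A)) R)) -
        (-(IGD (insert x A) (Finset.insert_nonempty x A) R)) := by
  simp only [IGD]
  have hsum : ∑ r ∈ R, ((insert x A).inf' (Finset.insert_nonempty x A) (fun s => euclDist s r)
        - (insert y (insert x A)).inf' (Finset.insert_nonempty y (insert x A))
          (fun s => euclDist s r))
      ≤ ∑ r ∈ R, (A.inf' hA (fun s => euclDist s r)
        - (insert y A).inf' (Finset.insert_nonempty y A) (fun s => euclDist s r)) := by
    apply Finset.sum_le_sum
    intro r _
    rw [Finset.inf'_insert (H := hA), Finset.inf'_insert (H := Finset.insert_nonempty x A), Finset.inf'_insert (H := hA), Finset.inf'_insert (H := hA)]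
    exact key_min _ _ _ inf_le_right
  rw [Finset.sum_sub_distrib, Finset.sum_sub_distrib] at hsum
  have hc : (0:ℝ) ≤ 1 / (R.card : ℝ) := by positivity
  nlinarith [mul_le_mul_of_nonneg_left hsum hc]
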